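/- If E is a free module of rank r over a commutative ring R of prime characteristic p, then the quotient of the symmetric algebra Sym(E) by the ideal generated by the p-th powers e^p of elements e of E is a free R-module of rank p^r, with basis the images of the monomials e₁^{i₁}⋯e_r^{i_r} with 0 ≤ i_j < p for a chosen basis e₁,…,e_r of E. -/

import Mathlib

/-!
In characteristic `p` the Frobenius is additive, so `(∑ j, f j • X j) ^ p = ∑ j, f j ^ p • X j ^ p`
and the ideal is the monomial ideal generated by the `X j ^ p`. For any monomial ideal `I`, the
monomials lying in `I` and those not lying in `I` span complementary submodules of the polynomial
ring, so the classes of the latter form a basis of the quotient. Here they are the monomials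
whose exponents are all `< p`.
-/

open MvPolynomial

noncomputable def Finsupp.setOfNotSingleLeEquiv (σ : Type*) [Finite σ] (p : ℕ) :
    {d : σ →₀ ℕ | ∀ s ∈ Set.range (Finsupp.single · p), ¬ s ≤ d} ≃ (σ → Fin p) where
  toFun d j := ⟨d.1 j, by simpa [Finsupp.single_le_iff] using d.2 _ ⟨j, rfl⟩⟩
  invFun i := ⟨Finsupp.equivFunOnFinite.symm fun j => i j, by simp [Finsupp.single_le_iff]⟩
  left_inv d := by ext; rfl
  right_inv i := by ext; rfl

namespace MvPolynomial

variable {σ R : Type*}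

section CommSemiring

variable [CommSemiring R]

theorem isCompl_restrictSupport {s t : Set (σ →₀ ℕ)} (h : IsCompl s t) :
    IsCompl (restrictSupport R s) (restrictSupport R t) := by
  constructor
  · rw [Submodule.disjoint_def]
    intro x hs ht
    rw [mem_restrictSupport_iff] at hs ht
    simpa using h.disjoint.mono hs ht
  · have hst : s ∪ t = Set.univ := h.sup_eq_top
    rw [codisjoint_iff, restrictSupport_eq_span, restrictSupport_eq_span, ← Submodule.span_union,
      ← Set.image_union, hst, ← restrictSupport_eq_span, restrictSupport_univ]

theorem span_range_monomial_subtype (s : Set (σ →₀ ℕ)) :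
    Submodule.span R (Set.range fun d : s => monomial d.1 (1 : R)) = restrictSupport R s := by
  rw [restrictSupport_eq_span, Set.image_eq_range]

theorem restrictScalars_span_monomial_image (S : Set (σ →₀ ℕ)) :
    (Ideal.span ((monomial · (1 : R)) '' S)).restrictScalars R =
      restrictSupport R {d | ∃ s ∈ S, s ≤ d} := by
  ext x
  simp [mem_ideal_span_monomial_image, mem_restrictSupport_iff, Set.subset_def]

theorem isCompl_span_monomial_image_restrictSupport (S : Set (σ →₀ ℕ)) :
    IsCompl ((Ideal.span ((monomial · (1 : R)) '' S)).restrictScalars R)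
      (restrictSupport R {d | ∀ s ∈ S, ¬ s ≤ d}) := by
  rw [restrictScalars_span_monomial_image]
  refine isCompl_restrictSupport ?_
  simpa [Set.compl_ofPred] using isCompl_compl (x := {d : σ →₀ ℕ | ∃ s ∈ S, s ≤ d})

theorem monomial_one_eq_prod_X_pow [Fintype σ] (d : σ →₀ ℕ) :
    monomial d (1 : R) = ∏ j, X j ^ d j := by
  rw [monomial_eq, C_1, one_mul, Finsupp.prod_fintype _ _ fun _ => pow_zero _]

theorem range_X_pow_eq_image_monomial (p : ℕ) :
    Set.range (fun j : σ => (X j : MvPolynomial σ R) ^ p) =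
      (monomial · 1) '' Set.range (Finsupp.single · p) := by
  rw [← Set.range_comp]
  simp [Function.comp_def, X_pow_eq_monomial]

theorem span_pow_linear_eq_span_X_pow [Fintype σ] (p : ℕ) [ExpChar R p] :
    Ideal.span {q : MvPolynomial σ R | ∃ f : σ → R, q = (∑ j, C (f j) * X j) ^ p} =
      Ideal.span (Set.range fun j => X j ^ p) := by
  classical
  apply le_antisymm <;> rw [Ideal.span_le]
  · rintro q ⟨f, rfl⟩
    rw [sum_pow_char]
    exact Ideal.sum_mem _ fun j _ => by
      rw [mul_pow]
      exact Ideal.mul_mem_left _ _ (Ideal.subset_span ⟨j, rfl⟩)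
  · rintro q ⟨j, rfl⟩
    refine Ideal.subset_span ⟨Pi.single j 1, ?_⟩
    simp [Pi.single_apply]

end CommSemiring

section QuotientMonomialIdeal

variable [CommRing R] (S : Set (σ →₀ ℕ))

theorem linearIndependent_mkQ_monomial :
    LinearIndependent R fun d : {d | ∀ s ∈ S, ¬ s ≤ d} =>
      ((Ideal.span ((monomial · (1 : R)) '' S)).restrictScalars R).mkQ (monomial d.1 1) := by
  have hv : LinearIndependent R fun d : {d | ∀ s ∈ S, ¬ s ≤ d} => monomial d.1 (1 : R) :=
    (basisMonomials σ R).linearIndependent.comp _ Subtype.val_injective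
  refine hv.map ?_
  rw [Submodule.ker_mkQ, span_range_monomial_subtype]
  exact (isCompl_span_monomial_image_restrictSupport S).symm.disjoint

theorem span_range_mkQ_monomial :
    ⊤ ≤ Submodule.span R (Set.range fun d : {d | ∀ s ∈ S, ¬ s ≤ d} =>
      ((Ideal.span ((monomial · (1 : R)) '' S)).restrictScalars R).mkQ (monomial d.1 1)) := by
  rw [Set.range_comp', Submodule.span_image, span_range_monomial_subtype, top_le_iff,
    Submodule.map_mkQ_eq_top]
  exact (isCompl_span_monomial_image_restrictSupport S).sup_eq_top

noncomputable def basisQuotientSpanMonomial :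
    Module.Basis {d : σ →₀ ℕ | ∀ s ∈ S, ¬ s ≤ d} R
      (MvPolynomial σ R ⧸ Ideal.span ((monomial · (1 : R)) '' S)) :=
  (Module.Basis.mk (linearIndependent_mkQ_monomial S) (span_range_mkQ_monomial S)).map
    (Submodule.Quotient.restrictScalarsEquiv R _)

theorem basisQuotientSpanMonomial_apply (d : {d : σ →₀ ℕ | ∀ s ∈ S, ¬ s ≤ d}) :
    basisQuotientSpanMonomial (R := R) S d = Ideal.Quotient.mk _ (monomial d.1 1) := by
  simp [basisQuotientSpanMonomial]

end QuotientMonomialIdeal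

end MvPolynomial

theorem stmt_1 (R : Type*) [CommRing R] (p : ℕ) (hp : p.Prime) [CharP R p] (r : ℕ)
    (J : Ideal (MvPolynomial (Fin r) R))
    (hJ : J = Ideal.span {q : MvPolynomial (Fin r) R |
      ∃ f : Fin r → R, q = (∑ j, MvPolynomial.C (f j) * MvPolynomial.X j) ^ p}) :
    ∃ b : Module.Basis (Fin r → Fin p) R (MvPolynomial (Fin r) R ⧸ J),
      ∀ i : Fin r → Fin p,
        b i = Ideal.Quotient.mk J (∏ j, MvPolynomial.X j ^ (i j : ℕ)) := by
  have : ExpChar R p := .prime hp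
  subst hJ
  rw [span_pow_linear_eq_span_X_pow, range_X_pow_eq_image_monomial]
  refine ⟨(basisQuotientSpanMonomial _).reindex (Finsupp.setOfNotSingleLeEquiv (Fin r) p),
    fun i => ?_⟩
  rw [Module.Basis.reindex_apply, basisQuotientSpanMonomial_apply, monomial_one_eq_prod_X_pow]
  rfl
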